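/- arXiv:1410.3764 — 3 statements merged into one kernel-verified Lean document; each statement's English description precedes it below -/
import Mathlib

section
/- Let n, x_0 be reals, m ≥ 2, and let (y_1, ..., y_m) be the unique real solution of Σ_{j=i}^{m} (1+(j−1)i)y_j = n − i·x_0 for i = 1,...,m. Then x_0 + Σ_{j=1}^{m} (j−1)y_j = ((m−1)n + x_0)/m · Π_{i=1}^{m−1} (i+i²)/(1+i+i²). -/
/-!
With the tail sums `S_k = x₀ + ∑_{j>k} (j-1) y_j`, subtracting consecutive equations gives
`(1 + k + k²) y_{k+1} = S_{k+1}`, hence `S_k = (k+1)² / (1 + k + k²) · S_{k+1}`. The last equation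
gives `S_{m-1} = ((m-1) n + x₀) / (1 + (m-1) + (m-1)²)`, and telescoping down to `S_0` yields a
product that differs from the stated one by the factor `(1 + (m-1) + (m-1)²) / m`.
-/

open Finset

def SolvesSystem (n x₀ : ℝ) (m : ℕ) (y : ℕ → ℝ) : Prop :=
  ∀ i, 1 ≤ i → i ≤ m →
    ∑ j ∈ Icc i m, (1 + ((j : ℝ) - 1) * (i : ℝ)) * y j = n - (i : ℝ) * x₀

def tailSum (x₀ : ℝ) (y : ℕ → ℝ) (m k : ℕ) : ℝ :=
  x₀ + ∑ j ∈ Ioc k m, ((j : ℝ) - 1) * y j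

theorem prod_range_mul_eq_of_eq_mul_succ {M : Type*} [CommMonoid M] (S r : ℕ → M) (N : ℕ)
    (h : ∀ k < N, S k = r k * S (k + 1)) :
    S 0 = (∏ k ∈ range N, r k) * S N := by
  induction N with
  | zero => simp
  | succ N ih =>
    rw [ih fun k hk => h k (by omega), h N (by omega), prod_range_succ, mul_assoc]

theorem prod_Icc_one_add_sq_div (N : ℕ) :
    ∏ i ∈ Icc 1 N, ((i : ℝ) + (i : ℝ) ^ 2) / (1 + (i : ℝ) + (i : ℝ) ^ 2) =
      (N + 1) * (∏ k ∈ range N, ((k : ℝ) + 1) ^ 2 / (1 + (k : ℝ) + (k : ℝ) ^ 2)) /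
        (1 + (N : ℝ) + (N : ℝ) ^ 2) := by
  induction N with
  | zero => simp
  | succ N ih =>
    rw [prod_Icc_succ_top (by omega), ih, prod_range_succ]
    push_cast
    field_simp
    ring

section

variable {n x₀ : ℝ} {m : ℕ} {y : ℕ → ℝ}

theorem tailSum_eq_tailSum_succ_add {k : ℕ} (hk : k < m) :
    tailSum x₀ y m k = tailSum x₀ y m (k + 1) + k * y (k + 1) := by
  rw [tailSum, tailSum, ← Icc_add_one_left_eq_Ioc, ← Icc_add_one_left_eq_Ioc,
    Icc_eq_cons_Ioc (by omega), sum_cons, ← Icc_add_one_left_eq_Ioc]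
  push_cast
  ring

/-- Subtracting equation `i + 1` from equation `i` leaves the tail sum, since the coefficient of
`y_j` drops by exactly `j - 1`. -/
theorem SolvesSystem.mul_eq_tailSum (h : SolvesSystem n x₀ m y) {i : ℕ} (hi : 1 ≤ i)
    (him : i < m) :
    (1 + ((i : ℝ) - 1) * i) * y i = tailSum x₀ y m i := by
  have eq_i := h i hi him.le
  have eq_succ := h (i + 1) (by omega) him
  rw [Icc_eq_cons_Ioc him.le, sum_cons] at eq_i
  rw [Icc_add_one_left_eq_Ioc] at eq_succ
  have coeff_drop : ∑ j ∈ Ioc i m, (1 + ((j : ℝ) - 1) * i) * y j =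
      ∑ j ∈ Ioc i m, (1 + ((j : ℝ) - 1) * ((i + 1 : ℕ) : ℝ)) * y j -
        ∑ j ∈ Ioc i m, ((j : ℝ) - 1) * y j := by
    rw [← sum_sub_distrib]
    refine sum_congr rfl fun j _ => ?_
    push_cast
    ring
  rw [tailSum]
  push_cast at eq_succ coeff_drop
  linear_combination eq_i - eq_succ - coeff_drop

theorem SolvesSystem.tailSum_eq_mul_tailSum_succ (h : SolvesSystem n x₀ m y) {k : ℕ}
    (hk : k + 1 < m) :
    tailSum x₀ y m k =
      ((k : ℝ) + 1) ^ 2 / (1 + (k : ℝ) + (k : ℝ) ^ 2) * tailSum x₀ y m (k + 1) := by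
  have diag := h.mul_eq_tailSum (i := k + 1) (by omega) hk
  rw [tailSum_eq_tailSum_succ_add (by omega)]
  push_cast at diag
  have : (1 + (k : ℝ) + (k : ℝ) ^ 2) ≠ 0 := by positivity
  field_simp
  linear_combination (k : ℝ) * diag

theorem SolvesSystem.tailSum_last {N : ℕ} (h : SolvesSystem n x₀ (N + 1) y) :
    tailSum x₀ y (N + 1) N = (N * n + x₀) / (1 + (N : ℝ) + (N : ℝ) ^ 2) := by
  have eq_last := h (N + 1) (by omega) le_rfl
  rw [Icc_self, sum_singleton] at eq_last
  rw [tailSum, ← Icc_add_one_left_eq_Ioc, Icc_self, sum_singleton]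
  push_cast at eq_last ⊢
  have : (1 + (N : ℝ) + (N : ℝ) ^ 2) ≠ 0 := by positivity
  field_simp
  linear_combination (N : ℝ) * eq_last

end

theorem stmt_8 (n x₀ : ℝ) (m : ℕ) (hm : 2 ≤ m) (y : ℕ → ℝ)
    (hsys : ∀ i, 1 ≤ i → i ≤ m →
      ∑ j ∈ Finset.Icc i m, (1 + ((j : ℝ) - 1) * (i : ℝ)) * y j = n - (i : ℝ) * x₀) :
    x₀ + ∑ j ∈ Finset.Icc 1 m, ((j : ℝ) - 1) * y j =
      (((m : ℝ) - 1) * n + x₀) / (m : ℝ) *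
        ∏ i ∈ Finset.Icc 1 (m - 1), ((i : ℝ) + (i : ℝ) ^ 2) / (1 + (i : ℝ) + (i : ℝ) ^ 2) := by
  obtain ⟨N, rfl⟩ : ∃ N, m = N + 1 := ⟨m - 1, by omega⟩
  have h : SolvesSystem n x₀ (N + 1) y := hsys
  have telescope := prod_range_mul_eq_of_eq_mul_succ (tailSum x₀ y (N + 1)) _ N
    fun k hk => h.tailSum_eq_mul_tailSum_succ (by omega)
  rw [tailSum, ← Icc_add_one_left_eq_Ioc, zero_add, h.tailSum_last] at telescope
  rw [telescope, Nat.add_sub_cancel, prod_Icc_one_add_sq_div]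
  push_cast
  have : (1 + (N : ℝ) + (N : ℝ) ^ 2) ≠ 0 := by positivity
  field_simp
  ring
end

section
/- The limit as m → ∞ of F(0, m) = (m−1)/m · Π_{i=1}^{m−1} (i+i²)/(1+i+i²) exists and equals π/cosh(√3·π/2) ≈ 0.412. -/
open Filter Real

noncomputable def F0 (m : ℕ) : ℝ :=
  ((m : ℝ) - 1) / (m : ℝ) *
    ∏ i ∈ Finset.Icc 1 (m - 1), ((i : ℝ) + (i : ℝ) ^ 2) / (1 + (i : ℝ) + (i : ℝ) ^ 2)

/-!
Since `(z + j) (1 - z + j) = j² + j + z (1 - z)`, the product of the Gauss sequences of `Γ(z)` and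
`Γ(1 - z)` is `n · n!² / ∏_{j ≤ n} (j² + j + z (1 - z))`, which therefore tends to
`Γ(z) Γ(1 - z) = π / sin (π z)`. As `∏_{i ≤ n} (i + i²) = n! (n + 1)!`, `F(0, n + 1)` is exactly
this sequence for a root `z = 1/2 + (√3/2) i` of `z (1 - z) = 1`, and `sin (π z) = cosh (√3 π / 2)`.
-/

open Finset Nat

namespace Complex

theorem GammaSeq_mul_GammaSeq_one_sub (z : ℂ) {n : ℕ} (hn : n ≠ 0) :
    GammaSeq z n * GammaSeq (1 - z) n =
      n * (n ! : ℂ) ^ 2 / ∏ j ∈ range (n + 1), ((j : ℂ) ^ 2 + j + z * (1 - z)) := by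
  have hn' : (n : ℂ) ≠ 0 := Nat.cast_ne_zero.mpr hn
  have hfactor : ∀ j : ℕ, (z + j) * (1 - z + j) = (j : ℂ) ^ 2 + j + z * (1 - z) := fun j => by
    ring
  rw [GammaSeq, GammaSeq, _root_.div_mul_div_comm, ← prod_mul_distrib]
  simp only [hfactor]
  rw [mul_mul_mul_comm, ← cpow_add _ _ hn', add_sub_cancel, cpow_one, sq]

theorem tendsto_mul_factorial_sq_div_prod (z : ℂ) :
    Tendsto (fun n : ℕ => n * (n ! : ℂ) ^ 2 / ∏ j ∈ range (n + 1), ((j : ℂ) ^ 2 + j + z * (1 - z)))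
      atTop (nhds (π / sin (π * z))) := by
  rw [← Gamma_mul_Gamma_one_sub]
  refine ((GammaSeq_tendsto_Gamma z).mul (GammaSeq_tendsto_Gamma (1 - z))).congr' ?_
  filter_upwards [eventually_ne_atTop 0] with n hn
  exact GammaSeq_mul_GammaSeq_one_sub z hn

theorem half_add_mul_I_mul_one_sub (t : ℝ) :
    (1 / 2 + t * I) * (1 - (1 / 2 + t * I)) = 1 / 4 + t ^ 2 := by
  linear_combination (-(t : ℂ) ^ 2) * I_sq

theorem sin_pi_mul_eq_cosh (t : ℝ) : sin (π * (1 / 2 + (t : ℂ) * I)) = cosh (π * t) := by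
  rw [mul_add, mul_one_div, ← mul_assoc, add_comm, sin_add_pi_div_two, cos_mul_I]

end Complex

theorem prod_Icc_add_sq_eq_factorial_mul_factorial {R : Type*} [CommSemiring R] (n : ℕ) :
    ∏ i ∈ Icc 1 n, ((i : R) + (i : R) ^ 2) = n ! * (n + 1)! := by
  induction n with
  | zero => simp
  | succ n ih =>
    rw [prod_Icc_succ_top (Nat.le_add_left 1 n), ih]
    push_cast [Nat.factorial_succ]
    ring

theorem prod_Icc_one_add_add_sq {R : Type*} [CommSemiring R] (n : ℕ) :
    ∏ i ∈ Icc 1 n, (1 + (i : R) + (i : R) ^ 2) = ∏ j ∈ range (n + 1), ((j : R) ^ 2 + j + 1) := by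
  induction n with
  | zero => simp
  | succ n ih =>
    rw [prod_Icc_succ_top (Nat.le_add_left 1 n), ih, prod_range_succ _ (n + 1)]
    push_cast
    ring

theorem F0_succ_eq (n : ℕ) :
    F0 (n + 1) = n * (n ! : ℝ) ^ 2 / ∏ j ∈ range (n + 1), ((j : ℝ) ^ 2 + j + 1) := by
  have hpos : 0 < ∏ j ∈ range (n + 1), ((j : ℝ) ^ 2 + j + 1) :=
    prod_pos fun j _ => by positivity
  rw [F0, Nat.add_sub_cancel, prod_div_distrib, prod_Icc_add_sq_eq_factorial_mul_factorial,
    prod_Icc_one_add_add_sq]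
  push_cast [Nat.factorial_succ]
  field_simp
  ring

theorem stmt_12 :
    Tendsto F0 atTop (nhds (π / Real.cosh (Real.sqrt 3 * π / 2))) := by
  set ω : ℂ := 1 / 2 + (√3 / 2 : ℝ) * Complex.I
  have hω : ω * (1 - ω) = 1 := by
    rw [Complex.half_add_mul_I_mul_one_sub, ← Complex.ofReal_pow, div_pow, sq_sqrt zero_le_three]
    norm_num
  have hlim : (π / cosh (√3 * π / 2) : ℝ) = (π : ℂ) / Complex.sin (π * ω) := by
    rw [Complex.sin_pi_mul_eq_cosh]
    push_cast
    congr 2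
    ring
  have hF0 : ∀ n : ℕ, (F0 (n + 1) : ℂ) =
      n * (n ! : ℂ) ^ 2 / ∏ j ∈ range (n + 1), ((j : ℂ) ^ 2 + j + ω * (1 - ω)) := by
    intro n
    simp [F0_succ_eq, hω]
  rw [← tendsto_add_atTop_iff_nat 1, ← tendsto_ofReal_iff, hlim]
  simpa only [Function.comp_def, hF0] using Complex.tendsto_mul_factorial_sq_div_prod ω
end

section
/- Let n, α be positive integers, x_0 = ⌊n/(1+α)⌋, and suppose m is a positive integer with n − m·x_0 ≥ 0 and (y_1, ..., y_m) is a vector of nonnegative integers satisfying t·x_0 + Σ_{i=t}^{m} (1+(i−1)t)y_i ≤ n for t = 1,...,m. Define k = Σ_{i=1}^{m} y_i and let (x_1, ..., x_k) be the weakly decreasing integer sequence in which the value j−1 appears exactly y_j times, for j = 1,...,m. Then (x_0, x_1, ..., x_k) satisfies: (1+α)x_0 ≤ n; (x_0+x_1+...+x_i)(1+x_i) ≤ n−i for i = 1,...,k; x_1 ≥ ... ≥ x_k ≥ 0; x_0+...+x_k ≥ 0; and x_0 + Σ_{i=1}^{k} x_i = x_0 + Σ_{j=1}^{m} (j−1)y_j.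 -/
/-!
The count conditions say that `x₁ ≥ ⋯ ≥ x_k` takes the value `j - 1` exactly `y_j` times, so
sums over an initial segment `x₁, …, x_i` regroup by value. If `x_i = t - 1`, the segment only
contains values `s - 1` with `s ≥ t`, the value `s - 1` at most `y_s` times; writing `c_s` for these
multiplicities, `i = ∑ c_s` and `x₁ + ⋯ + x_i = ∑ (s - 1) c_s`, hence
`(x₀ + ⋯ + x_i)(1 + x_i) + i = t x₀ + ∑ (1 + (s - 1) t) c_s`,
which the `t`-th inequality of `Ψ_{n,m}(x₀)` bounds by `n`.
-/

open Finset

namespace Finset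

variable {ι κ β M : Type*} [DecidableEq β] [AddCommMonoid M]
  {A : Finset ι} {T : Finset κ} {x : ι → β} {v : κ → β}

lemma forall_mem_image_of_sum_card_filter_eq_card (hv : Set.InjOn v T)
    (h : ∑ j ∈ T, #{a ∈ A | x a = v j} = #A) : ∀ a ∈ A, x a ∈ T.image v := by
  rwa [← card_filter_eq_iff, ← sum_card_fiberwise_eq_card_filter, sum_image hv]

lemma sum_comp_eq_sum_card_filter_nsmul (hv : Set.InjOn v T) (hx : ∀ a ∈ A, x a ∈ T.image v)
    (g : β → M) : ∑ a ∈ A, g (x a) = ∑ j ∈ T, #{a ∈ A | x a = v j} • g (v j) := by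
  simp only [← sum_fiberwise_of_maps_to' hx, sum_image hv, sum_const]

end Finset

lemma antitoneOn_Icc_of_succ_le {α : Type*} [Preorder α] {f : ℕ → α} {a b : ℕ}
    (hf : ∀ i, a ≤ i → i < b → f (i + 1) ≤ f i) : AntitoneOn f (Set.Icc a b) :=
  antitoneOn_of_succ_le Set.ordConnected_Icc fun i _ hi hi' => by
    simpa using hf i hi.1 (by simpa using hi'.2)

section ValueClasses

variable {k m : ℕ} {x y : ℕ → ℤ}

lemma injOn_natCast_sub_one (T : Finset ℕ) : Set.InjOn (fun j : ℕ => (j : ℤ) - 1) T :=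
  fun _ _ _ _ h => by simpa using h

lemma mem_image_of_count_eq (hk : (k : ℤ) = ∑ j ∈ Icc 1 m, y j)
    (hcount : ∀ j, 1 ≤ j → j ≤ m → (#{i ∈ Icc 1 k | x i = (j : ℤ) - 1} : ℤ) = y j) :
    ∀ i ∈ Icc 1 k, x i ∈ (Icc 1 m).image (fun j : ℕ => (j : ℤ) - 1) := by
  refine forall_mem_image_of_sum_card_filter_eq_card (injOn_natCast_sub_one _) ?_
  have : (∑ j ∈ Icc 1 m, #{i ∈ Icc 1 k | x i = (j : ℤ) - 1} : ℤ) = k := by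
    rw [hk]
    exact sum_congr rfl fun j hj => hcount j (mem_Icc.1 hj).1 (mem_Icc.1 hj).2
  rw [Nat.card_Icc, add_tsub_cancel_right]
  exact_mod_cast this

lemma sum_eq_sum_mul_count (hk : (k : ℤ) = ∑ j ∈ Icc 1 m, y j)
    (hcount : ∀ j, 1 ≤ j → j ≤ m → (#{i ∈ Icc 1 k | x i = (j : ℤ) - 1} : ℤ) = y j) :
    ∑ i ∈ Icc 1 k, x i = ∑ j ∈ Icc 1 m, ((j : ℤ) - 1) * y j := by
  refine (sum_comp_eq_sum_card_filter_nsmul (injOn_natCast_sub_one _)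
    (mem_image_of_count_eq hk hcount) id).trans ?_
  refine sum_congr rfl fun j hj => ?_
  rw [nsmul_eq_mul, hcount j (mem_Icc.1 hj).1 (mem_Icc.1 hj).2, mul_comm, id]

lemma prefix_mem_image (hk : (k : ℤ) = ∑ j ∈ Icc 1 m, y j)
    (hcount : ∀ j, 1 ≤ j → j ≤ m → (#{i ∈ Icc 1 k | x i = (j : ℤ) - 1} : ℤ) = y j)
    (hdec : ∀ i, 1 ≤ i → i < k → x (i + 1) ≤ x i) {i t : ℕ} (hi : i ∈ Icc 1 k)
    (hxi : x i = (t : ℤ) - 1) :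
    ∀ j ∈ Icc 1 i, x j ∈ (Icc t m).image (fun s : ℕ => (s : ℤ) - 1) := by
  intro j hj
  have hjk : j ∈ Icc 1 k := Icc_subset_Icc_right (mem_Icc.1 hi).2 hj
  obtain ⟨s, hs, hxj⟩ := mem_image.1 (mem_image_of_count_eq hk hcount j hjk)
  have hle : x i ≤ x j := antitoneOn_Icc_of_succ_le hdec (coe_Icc 1 k ▸ hjk)
    (coe_Icc 1 k ▸ hi) (mem_Icc.1 hj).2
  exact mem_image.2 ⟨s, mem_Icc.2 ⟨by omega, (mem_Icc.1 hs).2⟩, hxj⟩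

lemma prefix_mul_le {n x₀ : ℤ} (hk : (k : ℤ) = ∑ j ∈ Icc 1 m, y j)
    (hcount : ∀ j, 1 ≤ j → j ≤ m → (#{i ∈ Icc 1 k | x i = (j : ℤ) - 1} : ℤ) = y j)
    (hdec : ∀ i, 1 ≤ i → i < k → x (i + 1) ≤ x i)
    (hsys : ∀ t, 1 ≤ t → t ≤ m →
      (t : ℤ) * x₀ + ∑ s ∈ Icc t m, (1 + ((s : ℤ) - 1) * (t : ℤ)) * y s ≤ n)
    {i : ℕ} (hi : i ∈ Icc 1 k) :
    (x₀ + ∑ j ∈ Icc 1 i, x j) * (1 + x i) ≤ n - i := by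
  obtain ⟨t, ht, hxi⟩ := mem_image.1 (mem_image_of_count_eq hk hcount i hi)
  have hprefix := prefix_mem_image hk hcount hdec hi hxi.symm
  set c : ℕ → ℤ := fun s => #{j ∈ Icc 1 i | x j = (s : ℤ) - 1}
  have hcard : (i : ℤ) = ∑ s ∈ Icc t m, c s := by
    simpa [c] using sum_comp_eq_sum_card_filter_nsmul (injOn_natCast_sub_one _) hprefix
      (fun _ => (1 : ℤ))
  have hsum : ∑ j ∈ Icc 1 i, x j = ∑ s ∈ Icc t m, ((s : ℤ) - 1) * c s := by
    refine (sum_comp_eq_sum_card_filter_nsmul (injOn_natCast_sub_one _) hprefix id).trans ?_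
    exact sum_congr rfl fun s _ => by rw [nsmul_eq_mul, mul_comm, id]
  have hc : ∀ s ∈ Icc t m, c s ≤ y s := fun s hs => by
    rw [← hcount s (by grind) (mem_Icc.1 hs).2]
    exact Nat.cast_le.2 <|
      card_le_card (filter_subset_filter _ (Icc_subset_Icc_right (mem_Icc.1 hi).2))
  have hkey : (t : ℤ) * x₀ + ∑ s ∈ Icc t m, (1 + ((s : ℤ) - 1) * t) * c s ≤ n := by
    refine le_trans ?_ (hsys t (mem_Icc.1 ht).1 (mem_Icc.1 ht).2)
    gcongr with s hs
    · exact add_nonneg zero_le_one (mul_nonneg (by grind) t.cast_nonneg)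
    · exact hc s hs
  have hsplit : ∑ s ∈ Icc t m, (1 + ((s : ℤ) - 1) * t) * c s
      = ∑ s ∈ Icc t m, c s + t * ∑ s ∈ Icc t m, ((s : ℤ) - 1) * c s := by
    rw [mul_sum, ← sum_add_distrib]
    exact sum_congr rfl fun _ _ => by ring
  rw [← hxi, hsum]
  rw [hsplit, ← hcard] at hkey
  linarith

end ValueClasses

theorem stmt_17_general (n α : ℤ) (hn : 1 ≤ n) (hα : 1 ≤ α)
    (x₀ : ℤ) (hx₀ : x₀ = n / (1 + α))
    (m : ℕ)
    (y : ℕ → ℤ)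
    (hsys : ∀ t, 1 ≤ t → t ≤ m →
      (t : ℤ) * x₀ + ∑ i ∈ Finset.Icc t m, (1 + ((i : ℤ) - 1) * (t : ℤ)) * y i ≤ n)
    (k : ℕ) (hk : (k : ℤ) = ∑ j ∈ Finset.Icc 1 m, y j)
    (x : ℕ → ℤ) (hx0 : x 0 = x₀)
    (hdec : ∀ i, 1 ≤ i → i < k → x (i + 1) ≤ x i)
    (hcount : ∀ j, 1 ≤ j → j ≤ m →
      (((Finset.Icc 1 k).filter (fun i => x i = (j : ℤ) - 1)).card : ℤ) = y j) :
    (1 + α) * x 0 ≤ n ∧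
    (∀ i, 1 ≤ i → i ≤ k →
      (x 0 + ∑ j ∈ Finset.Icc 1 i, x j) * (1 + x i) ≤ n - (i : ℤ)) ∧
    (∀ i, 1 ≤ i → i < k → x (i + 1) ≤ x i) ∧
    (1 ≤ k → 0 ≤ x k) ∧
    0 ≤ x 0 + ∑ j ∈ Finset.Icc 1 k, x j ∧
    x 0 + ∑ i ∈ Finset.Icc 1 k, x i = x₀ + ∑ j ∈ Finset.Icc 1 m, ((j : ℤ) - 1) * y j := by
  have hnonneg : ∀ i ∈ Icc 1 k, 0 ≤ x i := fun i hi => by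
    obtain ⟨j, hj, hxi⟩ := mem_image.1 (mem_image_of_count_eq hk hcount i hi)
    grind
  have hx₀nonneg : 0 ≤ x₀ := hx₀ ▸ Int.ediv_nonneg (by omega) (by omega)
  rw [hx0]
  refine ⟨hx₀ ▸ Int.mul_ediv_self_le (by omega),
    fun i hi hik => prefix_mul_le hk hcount hdec hsys (mem_Icc.2 ⟨hi, hik⟩), hdec,
    fun hk1 => hnonneg k (mem_Icc.2 ⟨hk1, le_rfl⟩), add_nonneg hx₀nonneg (sum_nonneg hnonneg),
    by rw [sum_eq_sum_mul_count hk hcount]⟩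

theorem stmt_17 (n α : ℤ) (hn : 1 ≤ n) (hα : 1 ≤ α)
    (x₀ : ℤ) (hx₀ : x₀ = n / (1 + α))
    (m : ℕ) (hm : 1 ≤ m) (hnm : (m : ℤ) * x₀ ≤ n)
    (y : ℕ → ℤ) (hy : ∀ j, 1 ≤ j → j ≤ m → 0 ≤ y j)
    (hsys : ∀ t, 1 ≤ t → t ≤ m →
      (t : ℤ) * x₀ + ∑ i ∈ Finset.Icc t m, (1 + ((i : ℤ) - 1) * (t : ℤ)) * y i ≤ n)
    (k : ℕ) (hk : (k : ℤ) = ∑ j ∈ Finset.Icc 1 m, y j)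
    (x : ℕ → ℤ) (hx0 : x 0 = x₀)
    (hdec : ∀ i, 1 ≤ i → i < k → x (i + 1) ≤ x i)
    (hcount : ∀ j, 1 ≤ j → j ≤ m →
      (((Finset.Icc 1 k).filter (fun i => x i = (j : ℤ) - 1)).card : ℤ) = y j) :
    (1 + α) * x 0 ≤ n ∧
    (∀ i, 1 ≤ i → i ≤ k →
      (x 0 + ∑ j ∈ Finset.Icc 1 i, x j) * (1 + x i) ≤ n - (i : ℤ)) ∧
    (∀ i, 1 ≤ i → i < k → x (i + 1) ≤ x i) ∧
    (1 ≤ k → 0 ≤ x k) ∧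
    0 ≤ x 0 + ∑ j ∈ Finset.Icc 1 k, x j ∧
    x 0 + ∑ i ∈ Finset.Icc 1 k, x i = x₀ + ∑ j ∈ Finset.Icc 1 m, ((j : ℤ) - 1) * y j :=
  stmt_17_general n α hn hα x₀ hx₀ m y hsys k hk x hx0 hdec hcount
end
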